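/- arXiv:1506.02228 — 2 statements merged into one kernel-verified Lean document; each statement's English description precedes it below -/
import Mathlib

section
/- Let f : X × Y → ℝ∪{±∞} where X is a compact topological space and Y ⊆ ℝ. If for every y ∈ Y the function x ↦ f(x,y) is lower semicontinuous, and for every x ∈ X the function y ↦ f(x,y) is monotone (non-decreasing), then inf_{x∈X} sup_{y∈Y} f(x,y) = sup_{y∈Y} inf_{x∈X} f(x,y). -/
/-!
Fix `c = sup_y inf_x f(x,y)`. By lower semicontinuity and compactness each `f(·,y)` attains its
infimum, so the sublevel sets `{x | f(x,y) ≤ c}` are nonempty and closed; by monotonicity in `y`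
they decrease as `y` grows, hence form a directed family. Compactness gives a point `x₀` in all
of them, and then `inf_x sup_y f(x,y) ≤ sup_y f(x₀,y) ≤ c`. The other inequality holds always.
-/

open Set

section Minimax

variable {X ι α : Type*} [TopologicalSpace X] [CompactSpace X] [Nonempty X]
  [Preorder ι] [IsDirected ι (· ≤ ·)] [Nonempty ι] [CompleteLinearOrder α] {f : X → ι → α}

theorem exists_forall_le_iSup_iInf_of_lowerSemicontinuous_of_monotone
    (hlsc : ∀ i, LowerSemicontinuous (f · i)) (hmono : ∀ x, Monotone (f x)) :
    ∃ x₀, ∀ i, f x₀ i ≤ ⨆ j, ⨅ x, f x j := by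
  set c := ⨆ j, ⨅ x, f x j
  have hclosed : ∀ i, IsClosed ((f · i) ⁻¹' Iic c) := fun i => (hlsc i).isClosed_preimage c
  have hne : ∀ i, ((f · i) ⁻¹' Iic c).Nonempty := fun i => by
    obtain ⟨x, -, hmin⟩ :=
      ((hlsc i).lowerSemicontinuousOn univ).exists_isMinOn univ_nonempty isCompact_univ
    exact ⟨x, (le_iInf fun x' => hmin (mem_univ x')).trans (le_iSup (fun j => ⨅ x, f x j) i)⟩
  have hdir : Directed (· ⊇ ·) fun i => (f · i) ⁻¹' Iic c := fun i j => by
    obtain ⟨k, hik, hjk⟩ := directed_of (· ≤ ·) i j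
    exact ⟨k, fun x hx => (hmono x hik).trans hx, fun x hx => (hmono x hjk).trans hx⟩
  obtain ⟨x₀, hx₀⟩ := IsCompact.nonempty_iInter_of_directed_nonempty_isCompact_isClosed _ hdir
    hne (fun i => (hclosed i).isCompact) hclosed
  exact ⟨x₀, fun i => mem_iInter.1 hx₀ i⟩

theorem iInf_iSup_eq_iSup_iInf_of_lowerSemicontinuous_of_monotone
    (hlsc : ∀ i, LowerSemicontinuous (f · i)) (hmono : ∀ x, Monotone (f x)) :
    ⨅ x, ⨆ i, f x i = ⨆ i, ⨅ x, f x i := by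
  refine le_antisymm ?_ (iSup_iInf_le_iInf_iSup fun i x => f x i)
  obtain ⟨x₀, hx₀⟩ := exists_forall_le_iSup_iInf_of_lowerSemicontinuous_of_monotone hlsc hmono
  exact iInf_le_of_le x₀ (iSup_le hx₀)

end Minimax

/-- Minimax for lower semicontinuous, monotone (in the second argument) extended-real-valued
functions on a compact space times a subset of ℝ (Mosonyi–Hiai, Corollary A2). -/
theorem minimax_lsc_monotone
    {X : Type*} [TopologicalSpace X] [CompactSpace X] [Nonempty X]
    (Y : Set ℝ) (hY : Y.Nonempty) (f : X → ℝ → EReal)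
    (hlsc : ∀ y ∈ Y, LowerSemicontinuous (fun x => f x y))
    (hmono : ∀ x : X, MonotoneOn (fun y => f x y) Y) :
    ⨅ x : X, ⨆ y ∈ Y, f x y = ⨆ y ∈ Y, ⨅ x : X, f x y := by
  have : Nonempty Y := hY.to_subtype
  simp only [← iSup_subtype'']
  exact iInf_iSup_eq_iSup_iInf_of_lowerSemicontinuous_of_monotone (f := fun x (y : Y) => f x y)
    (fun y => hlsc y y.2) (fun x => monotoneOn_iff_monotone.1 (hmono x))
end

section
/- Let f : X × Y → ℝ∪{±∞} where X is a compact topological space and Y ⊆ ℝ. If for every y ∈ Y the function x ↦ f(x,y) is upper semicontinuous, and for every x ∈ X the function y ↦ f(x,y) is monotone, then inf_{y∈Y} sup_{x∈X} f(x,y) = sup_{x∈X} inf_{y∈Y} f(x,y). -/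
/-!
Fix `c` strictly between `⨆ x, ⨅ y, f x y` and `⨅ y, ⨆ x, f x y`. The sets `{x | f x y < c}`,
`y ∈ Y`, are open by upper semicontinuity, cover `X`, and form a directed family because `f` is
monotone in `y`. By compactness a single one of them is all of `X`, so `⨆ x, f x y ≤ c` for that
`y`, a contradiction.
-/

open Set

section

variable {X ι α : Type*} [TopologicalSpace X] [CompactSpace X] [CompleteLinearOrder α]

theorem exists_forall_lt_of_directed_upperSemicontinuous [Nonempty ι] {g : ι → X → α}
    (hg : ∀ i, UpperSemicontinuous (g i)) (hdir : Directed (· ≥ ·) g) {c : α}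
    (hc : ∀ x, ∃ i, g i x < c) : ∃ i, ∀ x, g i x < c := by
  have hcover : univ ⊆ ⋃ i, {x | g i x < c} := fun x _ => mem_iUnion.mpr (hc x)
  have hdir' : Directed (· ⊆ ·) fun i => {x | g i x < c} :=
    hdir.mono_comp (g := fun h => {x | h x < c}) _ fun _ _ hle x hx => (hle x).trans_lt hx
  obtain ⟨i, hi⟩ := isCompact_univ.elim_directed_cover _ (fun i => (hg i).isOpen_preimage c)
    hcover hdir'
  exact ⟨i, fun x => hi (mem_univ x)⟩

theorem iInf_iSup_eq_iSup_iInf_of_directed_upperSemicontinuous [DenselyOrdered α] [Nonempty ι]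
    {g : ι → X → α} (hg : ∀ i, UpperSemicontinuous (g i)) (hdir : Directed (· ≥ ·) g) :
    ⨅ i, ⨆ x, g i x = ⨆ x, ⨅ i, g i x := by
  refine le_antisymm (not_lt.mp fun hlt => ?_) (iSup_iInf_le_iInf_iSup _)
  obtain ⟨c, hc_gt, hc_lt⟩ := exists_between hlt
  have hc : ∀ x, ∃ i, g i x < c := fun x => iInf_lt_iff.mp ((le_iSup _ x).trans_lt hc_gt)
  obtain ⟨i, hi⟩ := exists_forall_lt_of_directed_upperSemicontinuous hg hdir hc
  exact hc_lt.not_ge ((iInf_le _ i).trans (iSup_le fun x => (hi x).le))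

end

theorem minimax_usc_monotone_general
    {X : Type*} [TopologicalSpace X] [CompactSpace X]
    (Y : Set ℝ) (hY : Y.Nonempty) (f : X → ℝ → EReal)
    (husc : ∀ y ∈ Y, UpperSemicontinuous (fun x => f x y))
    (hmono : ∀ x : X, MonotoneOn (fun y => f x y) Y) :
    ⨅ y ∈ Y, ⨆ x : X, f x y = ⨆ x : X, ⨅ y ∈ Y, f x y := by
  have : Nonempty Y := hY.to_subtype
  have hmono' : Monotone fun (y : Y) x => f x y := fun a b hab x => hmono x a.2 b.2 hab
  simpa only [iInf_subtype'] using
    iInf_iSup_eq_iSup_iInf_of_directed_upperSemicontinuous (fun y : Y => husc y y.2)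
      hmono'.directed_ge

/-- Minimax for upper semicontinuous, monotone (in the second argument) extended-real-valued
functions on a compact space times a subset of ℝ (Mosonyi–Hiai, Corollary A2, second form). -/
theorem minimax_usc_monotone
    {X : Type*} [TopologicalSpace X] [CompactSpace X] [Nonempty X]
    (Y : Set ℝ) (hY : Y.Nonempty) (f : X → ℝ → EReal)
    (husc : ∀ y ∈ Y, UpperSemicontinuous (fun x => f x y))
    (hmono : ∀ x : X, MonotoneOn (fun y => f x y) Y) :
    ⨅ y ∈ Y, ⨆ x : X, f x y = ⨆ x : X, ⨅ y ∈ Y, f x y :=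
  minimax_usc_monotone_general Y hY f husc hmono
end
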